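/- arXiv:2001.06784 — 2 statements merged into one kernel-verified Lean document; each statement's English description precedes it below -/
import Mathlib

section
/- Let S be a set of vertices, p ∈ S a chosen pivot, and {v₁,…,v_ℓ} = S \ ({p} ∪ N(p)). Define the set families 𝒦_p = {cliques C ⊆ S with C \ {p} ⊆ N(S,p)} and for each i, 𝒦_i = {cliques C ⊆ S with v_i ∈ C and C \ {v_i} ⊆ N(S,v_i) \ {v₁,…,v_{i-1}}}. Then the family of all cliques of G contained in S is the disjoint union of 𝒦_p and the 𝒦_i for 1 ≤ i ≤ ℓ. -/
/-!
A clique `C ⊆ S` is sorted by the first vertex `v_i` of the list that it contains. If there is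
one, `C ∈ 𝒦_i`: the other members of `C` are neighbours of `v_i` because `C` is a clique, and they
avoid `v₁, …, v_{i-1}` by minimality of `i`. If there is none, every member of `C` other than `p`
is a neighbour of `p`, so `C ∈ 𝒦_p`. Conversely membership in each family forces exactly this
sorting, so the families are disjoint.
-/

/-- The family 𝒦_p : cliques `C ⊆ S` with `C \ {p} ⊆ N(S,p)`. -/
def InKp {V : Type*} (G : SimpleGraph V) (S : Finset V) (p : V) (C : Finset V) : Prop :=
  ∀ w ∈ C, w ≠ p → w ∈ S ∧ G.Adj p w

/-- The family 𝒦_i : cliques `C ⊆ S` with `v_i ∈ C` and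
`C \ {v_i} ⊆ N(S, v_i) \ {v₁, …, v_{i-1}}`. -/
def InKi {V : Type*} (G : SimpleGraph V) (S : Finset V) (vs : List V)
    (i : Fin vs.length) (C : Finset V) : Prop :=
  vs.get i ∈ C ∧ ∀ w ∈ C, w ≠ vs.get i →
    w ∈ S ∧ G.Adj (vs.get i) w ∧ ∀ j : Fin vs.length, j < i → w ≠ vs.get j

theorem existsUnique_option_first {ι : Type*} [LinearOrder ι] [WellFoundedLT ι] (P : ι → Prop) :
    ∃! o : Option ι, o.elim (∀ i, ¬ P i) (fun i => P i ∧ ∀ j < i, ¬ P j) := by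
  by_cases hP : ∃ i, P i
  · obtain ⟨i, hi, hmin⟩ := WellFounded.has_min wellFounded_lt {i | P i} hP
    refine ⟨some i, ⟨hi, fun j hj hPj => hmin j hPj hj⟩, ?_⟩
    rintro (_ | j) hj
    · exact absurd hi (hj i)
    · obtain ⟨hPj, hjmin⟩ := hj
      rcases lt_trichotomy i j with hij | rfl | hji
      · exact absurd hi (hjmin i hij)
      · rfl
      · exact (hmin j hPj hji).elim
  · push Not at hP
    refine ⟨none, hP, ?_⟩
    rintro (_ | j) hj
    · rfl
    · exact absurd hj.1 (hP j)

section Pivot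

variable {V : Type*} (G : SimpleGraph V) (S : Finset V) (vs : List V) (C : Finset V)

theorem inKp_iff_forall_get_notMem {p : V} (hvs : ∀ x : V, x ∈ vs ↔ x ∈ S ∧ x ≠ p ∧ ¬ G.Adj p x)
    (hCS : C ⊆ S) : InKp G S p C ↔ ∀ i : Fin vs.length, vs.get i ∉ C := by
  constructor
  · intro hKp i hiC
    obtain ⟨-, hip, hnadj⟩ := (hvs _).1 (vs.get_mem i)
    exact hnadj (hKp _ hiC hip).2
  · intro hnot w hw hwp
    refine ⟨hCS hw, by_contra fun hnadj => ?_⟩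
    obtain ⟨k, rfl⟩ := List.get_of_mem ((hvs w).2 ⟨hCS hw, hwp, hnadj⟩)
    exact hnot k hw

theorem inKi_iff_get_mem_and_forall_lt_notMem (hnodup : vs.Nodup) (hC : G.IsClique ↑C)
    (hCS : C ⊆ S) (i : Fin vs.length) :
    InKi G S vs i C ↔ vs.get i ∈ C ∧ ∀ j < i, vs.get j ∉ C := by
  constructor
  · rintro ⟨hiC, hKi⟩
    refine ⟨hiC, fun j hji hjC => ?_⟩
    have hne : vs.get j ≠ vs.get i := fun h => hji.ne (hnodup.get_inj_iff.1 h)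
    exact (hKi _ hjC hne).2.2 j hji rfl
  · rintro ⟨hiC, hfirst⟩
    refine ⟨hiC, fun w hw hwi => ⟨hCS hw, hC hiC hw (Ne.symm hwi), ?_⟩⟩
    rintro j hji rfl
    exact hfirst j hji hw

end Pivot

theorem stmt6_general {V : Type*} (G : SimpleGraph V)
    (S : Finset V) (p : V)
    (vs : List V) (hnodup : vs.Nodup)
    (hvs : ∀ x : V, x ∈ vs ↔ x ∈ S ∧ x ≠ p ∧ ¬ G.Adj p x)
    (C : Finset V) (hC : G.IsClique ↑C) (hCS : C ⊆ S) :
    ∃! o : Option (Fin vs.length),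
      o.elim (InKp G S p C) (fun i => InKi G S vs i C) := by
  refine (existsUnique_congr fun o => ?_).2 (existsUnique_option_first fun i => vs.get i ∈ C)
  cases o with
  | none => exact inKp_iff_forall_get_notMem G S vs C hvs hCS
  | some i => exact inKi_iff_get_mem_and_forall_lt_notMem G S vs C hnodup hC hCS i

theorem stmt6 {V : Type*} [Fintype V] [DecidableEq V] (G : SimpleGraph V)
    [DecidableRel G.Adj] (S : Finset V) (p : V) (hp : p ∈ S)
    (vs : List V) (hnodup : vs.Nodup)
    (hvs : ∀ x : V, x ∈ vs ↔ x ∈ S ∧ x ≠ p ∧ ¬ G.Adj p x)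
    (C : Finset V) (hC : G.IsClique ↑C) (hCS : C ⊆ S) :
    ∃! o : Option (Fin vs.length),
      o.elim (InKp G S p C) (fun i => InKi G S vs i C) :=
  stmt6_general G S p vs hnodup hvs C hC hCS
end

section
/- If T : ℕ → ℝ satisfies T(0) ≤ c, and for every s ≥ 1 there exists r with 1 ≤ r ≤ s such that T(s) ≤ r · T(s − r) + c·s², then T(s) ≤ C · 3^{s/3} for some constant C depending only on c. (Recurrence underlying the 3^{n/3} bound on Bron–Kerbosch type pivoting.) -/
/-!
Dividing by `3 ^ (s / 3)`, the normalized cost `U s = T s / 3 ^ (s / 3)` satisfies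
`U s ≤ U (s - r) + c s² / 3 ^ (s / 3)`, because `r ≤ 3 ^ (r / 3)` for every natural `r`
(equivalently `r ^ 3 ≤ 3 ^ r`, with equality at `r = 3`). Hence `U s` is bounded by the partial sums
of `∑ c (k² + 1) / 3 ^ (k / 3)`, a convergent series.
-/

open Finset

theorem Nat.cube_le_three_pow (n : ℕ) : n ^ 3 ≤ 3 ^ n := by
  rcases lt_or_ge n 3 with hn | hn
  · interval_cases n <;> norm_num
  induction n, hn using Nat.le_induction with
  | base => norm_num
  | succ n hn ih =>
    calc (n + 1) ^ 3 ≤ 3 * n ^ 3 := by nlinarith [Nat.mul_le_mul hn hn]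
      _ ≤ 3 * 3 ^ n := Nat.mul_le_mul_left 3 ih
      _ = 3 ^ (n + 1) := by ring

theorem natCast_le_cbrt_three_pow (r : ℕ) : (r : ℝ) ≤ ((3 : ℝ) ^ ((1 : ℝ) / 3)) ^ r := by
  have hcube : ((3 : ℝ) ^ ((1 : ℝ) / 3)) ^ 3 = 3 := by
    rw [← Real.rpow_natCast, ← Real.rpow_mul (by norm_num)]
    norm_num
  refine le_of_pow_le_pow_left₀ (n := 3) (by norm_num) (by positivity) ?_
  rw [← pow_mul, mul_comm, pow_mul, hcube]
  exact_mod_cast Nat.cube_le_three_pow r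

theorem three_rpow_div_three (s : ℕ) :
    (3 : ℝ) ^ ((s : ℝ) / 3) = ((3 : ℝ) ^ ((1 : ℝ) / 3)) ^ s := by
  rw [← Real.rpow_mul_natCast (by norm_num)]
  ring_nf

theorem summable_sq_add_one_div_pow {ρ : ℝ} (hρ : 1 < ρ) :
    Summable fun k : ℕ => ((k : ℝ) ^ 2 + 1) / ρ ^ k := by
  have hinv : ‖ρ⁻¹‖ < 1 := by
    rw [norm_inv, Real.norm_of_nonneg (by linarith)]
    exact inv_lt_one_of_one_lt₀ hρ
  refine ((summable_pow_mul_geometric_of_norm_lt_one 2 hinv).add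
    (summable_geometric_of_lt_one (by positivity) (lt_of_abs_lt hinv))).congr fun k => ?_
  rw [inv_pow]
  ring

theorem le_sum_div_pow_mul_pow_of_branching {ρ : ℝ} (hρ : ∀ r : ℕ, (r : ℝ) ≤ ρ ^ r)
    {T g : ℕ → ℝ} (hg : ∀ s, 0 ≤ g s) (h0 : T 0 ≤ g 0)
    (hrec : ∀ s, 1 ≤ s → ∃ r : ℕ, 1 ≤ r ∧ r ≤ s ∧ T s ≤ r * T (s - r) + g s) (s : ℕ) :
    T s ≤ (∑ k ∈ range (s + 1), g k / ρ ^ k) * ρ ^ s := by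
  have hρ_pos : 0 < ρ := zero_lt_one.trans_le (by simpa using hρ 1)
  set P : ℕ → ℝ := fun n => ∑ k ∈ range (n + 1), g k / ρ ^ k
  have hP_nonneg (n : ℕ) : 0 ≤ P n := sum_nonneg fun k _ => div_nonneg (hg k) (by positivity)
  induction s using Nat.strong_induction_on with
  | _ s ih =>
  rcases s with _ | s
  · simpa [P] using h0
  obtain ⟨r, hr, hrs, hTs⟩ := hrec (s + 1) s.succ_pos
  have hP_mono : P (s + 1 - r) ≤ P s :=
    sum_le_sum_of_subset_of_nonneg (range_subset_range.2 (by omega))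
      fun k _ _ => div_nonneg (hg k) (by positivity)
  have hbranch : (r : ℝ) * ρ ^ (s + 1 - r) ≤ ρ ^ (s + 1) := by
    calc (r : ℝ) * ρ ^ (s + 1 - r) ≤ ρ ^ r * ρ ^ (s + 1 - r) := by gcongr; exact hρ r
      _ = ρ ^ (s + 1) := by rw [← pow_add, Nat.add_sub_cancel' hrs]
  calc T (s + 1) ≤ r * T (s + 1 - r) + g (s + 1) := hTs
    _ ≤ r * (P (s + 1 - r) * ρ ^ (s + 1 - r)) + g (s + 1) := by
        gcongr
        exact ih _ (by omega)
    _ = P (s + 1 - r) * (r * ρ ^ (s + 1 - r)) + g (s + 1) := by ring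
    _ ≤ P s * ρ ^ (s + 1) + g (s + 1) := by gcongr; exact hP_nonneg _
    _ = P (s + 1) * ρ ^ (s + 1) := by
        rw [show P (s + 1) = P s + g (s + 1) / ρ ^ (s + 1) from sum_range_succ _ _, add_mul,
          div_mul_cancel₀ _ (by positivity)]

theorem stmt13 :
    ∃ f : ℝ → ℝ, ∀ c : ℝ, 0 < c → ∀ T : ℕ → ℝ,
      (∀ s : ℕ, 0 ≤ T s) → T 0 ≤ c →
      (∀ s : ℕ, 1 ≤ s → ∃ r : ℕ, 1 ≤ r ∧ r ≤ s ∧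
        T s ≤ (r : ℝ) * T (s - r) + c * (s : ℝ) ^ 2) →
      ∀ s : ℕ, T s ≤ f c * (3 : ℝ) ^ ((s : ℝ) / 3) := by
  set ρ : ℝ := (3 : ℝ) ^ ((1 : ℝ) / 3)
  refine ⟨fun c => c * ∑' k : ℕ, ((k : ℝ) ^ 2 + 1) / ρ ^ k, fun c hc T _ h0 hrec s => ?_⟩
  have hrec' : ∀ s, 1 ≤ s → ∃ r : ℕ, 1 ≤ r ∧ r ≤ s ∧
      T s ≤ r * T (s - r) + c * ((s : ℝ) ^ 2 + 1) := fun s hs => by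
    obtain ⟨r, hr, hrs, hTs⟩ := hrec s hs
    exact ⟨r, hr, hrs, by linarith⟩
  have hsum := summable_sq_add_one_div_pow (Real.one_lt_rpow (by norm_num) (by norm_num) : 1 < ρ)
  rw [three_rpow_div_three]
  calc T s ≤ (∑ k ∈ range (s + 1), c * ((k : ℝ) ^ 2 + 1) / ρ ^ k) * ρ ^ s :=
        le_sum_div_pow_mul_pow_of_branching natCast_le_cbrt_three_pow
          (fun k => by positivity) (by simpa using h0) hrec' s
    _ = c * (∑ k ∈ range (s + 1), ((k : ℝ) ^ 2 + 1) / ρ ^ k) * ρ ^ s := by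
        simp only [mul_sum, mul_div_assoc]
    _ ≤ c * (∑' k : ℕ, ((k : ℝ) ^ 2 + 1) / ρ ^ k) * ρ ^ s := by
        gcongr
        exact hsum.sum_le_tsum _ fun k _ => by positivity
end
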